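/- Convergence of the rescaled routing coefficients. Let λ ∈ (0,1), κ := (1−λ)⁻¹, and let σ : [0,∞) → [0,∞) be continuous, positive on (0,∞) and regularly varying at 0 with index λ. Let δ : (x₀,∞) → (0,∞) be regularly varying at ∞ with index −κ, satisfy x δ(x) = σ(δ(x)) for all x > x₀, and δ(x) → 0 as x → ∞. Let r_i, r_j : (0,∞) → (0,∞) satisfy r_i(u) → ∞, r_j(u) → ∞ and r_j(u)/r_i(u) → 𝔯_{ij} ∈ [0,1] as u → ∞, and let p_{ij} ≥ 0. Then lim_{u→∞} p_{ij} · (r_i(u) δ(r_i(u))) / (r_j(u) δ(r_j(u))) = p_{ij} · 𝔯_{ij}^{κλ}, where 0^{κλ} := 0; equivalently, lim_{u→∞} p_{ij} · σ(δ(r_i(u)))/σ(δ(r_j(u))) = p_{ij} · 𝔯_{ij}^{κλ}. -/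

import Mathlib

/-!
Write `σ(x) = x^λ ℓ(x)` with `ℓ` slowly varying at `0`, and put `χ(s) = log ℓ(e^{-s})`,
`s(r) = -log δ(r)`. The equation `r δ(r) = σ(δ(r))` becomes `log r = χ(s) + (1 - λ) s` and
`log σ(δ(r)) = (χ(s) - λ log r) / (1 - λ)`, so `log (σ(δ(rᵢ)) / σ(δ(rⱼ)))` is
`λ/(1-λ) · log (rⱼ/rᵢ)` up to the error `(χ(sᵢ) - χ(sⱼ)) / (1 - λ)`. Since `σ` is continuous, the
uniform convergence theorem for slowly varying functions (proved by a Baire category argument)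
and the Potter-type bound `|χ t - χ s| ≤ ε (|t - s| + 1)` it implies show that this error tends
to `0` when `𝔯 > 0` and is `o(log (rᵢ/rⱼ))` when `𝔯 = 0`.
-/

open Filter Topology Set

theorem mul_abs_sub_le_abs_sub_add_abs_sub (χ : ℝ → ℝ) {c : ℝ} (hc₀ : 0 ≤ c) (s t : ℝ) :
    c * |t - s| ≤ |(χ t + c * t) - (χ s + c * s)| + |χ t - χ s| := by
  rw [← abs_of_nonneg hc₀, ← abs_mul, abs_of_nonneg hc₀]
  calc |c * (t - s)| = |((χ t + c * t) - (χ s + c * s)) - (χ t - χ s)| := by ring_nf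
    _ ≤ _ := abs_sub _ _

def AddSlowlyVarying (χ : ℝ → ℝ) : Prop :=
  ∀ u, Tendsto (fun s => χ (s + u) - χ s) atTop (𝓝 0)

namespace AddSlowlyVarying

variable {χ : ℝ → ℝ}

theorem eventually_abs_sub_lt (hχ : AddSlowlyVarying χ) (u : ℝ) {ε : ℝ} (hε : 0 < ε) :
    ∀ᶠ s in atTop, |χ (s + u) - χ s| < ε := by
  simpa [Real.dist_eq] using Metric.tendsto_nhds.1 (hχ u) ε hε

/-- Baire category: some `Eₙ = {v | ∀ s ≥ n, |χ (s + v) - χ s| ≤ ε / 2}` contains a ball. -/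
theorem exists_eventually_forall_abs_sub_le (hχ : AddSlowlyVarying χ) (hc : Continuous χ)
    {ε : ℝ} (hε : 0 < ε) :
    ∃ ℓ > 0, ∀ᶠ s in atTop, ∀ u ∈ Icc 0 ℓ, |χ (s + u) - χ s| ≤ ε := by
  set E : ℕ → Set ℝ := fun n => ⋂ (s : ℝ) (_ : (n : ℝ) ≤ s), {v : ℝ | |χ (s + v) - χ s| ≤ ε / 2}
  have hclosed : ∀ n, IsClosed (E n) := fun n =>
    isClosed_biInter fun s _ => isClosed_le (by fun_prop) continuous_const
  have hcover : ⋃ n, E n = univ := by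
    refine eq_univ_of_forall fun v => ?_
    obtain ⟨X, hX⟩ := eventually_atTop.1 (hχ.eventually_abs_sub_lt v (half_pos hε))
    exact mem_iUnion.2 ⟨⌈X⌉₊, mem_iInter₂.2 fun s hs => (hX s ((Nat.le_ceil X).trans hs)).le⟩
  obtain ⟨N, v₀, hv₀⟩ := nonempty_interior_of_iUnion_of_closed hclosed hcover
  obtain ⟨ρ, hρ, hball⟩ := Metric.mem_nhds_iff.1 (mem_interior_iff_mem_nhds.1 hv₀)
  have hE : ∀ v ∈ Metric.ball v₀ ρ, ∀ s, (N : ℝ) ≤ s → |χ (s + v) - χ s| ≤ ε / 2 :=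
    fun v hv => by simpa [E] using hball hv
  refine ⟨ρ / 2, half_pos hρ, eventually_atTop.2 ⟨N + v₀, fun s hs u hu => ?_⟩⟩
  have h₁ := hE v₀ (Metric.mem_ball_self hρ) (s - v₀) (by linarith)
  have h₂ := hE (v₀ + u) (by rw [Metric.mem_ball, Real.dist_eq]; grind [abs_of_nonneg])
    (s - v₀) (by linarith)
  rw [sub_add_cancel] at h₁
  rw [show s - v₀ + (v₀ + u) = s + u by ring] at h₂
  calc |χ (s + u) - χ s| ≤ |χ (s + u) - χ (s - v₀)| + |χ (s - v₀) - χ s| := abs_sub_le _ _ _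
    _ ≤ ε / 2 + ε / 2 := add_le_add h₂ (by rwa [abs_sub_comm])
    _ = ε := add_halves ε

/-- Uniform convergence theorem: cover `[-M, M]` by the windows `[kℓ, (k+1)ℓ]`, `|k| ≤ ⌈M/ℓ⌉`. -/
theorem eventually_forall_abs_sub_le (hχ : AddSlowlyVarying χ) (hc : Continuous χ)
    {ε : ℝ} (hε : 0 < ε) (M : ℝ) :
    ∀ᶠ s in atTop, ∀ u ∈ Icc (-M) M, |χ (s + u) - χ s| ≤ ε := by
  obtain ⟨ℓ, hℓ, hwin⟩ := hχ.exists_eventually_forall_abs_sub_le hc (half_pos hε)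
  set K := Finset.Icc (-⌈M / ℓ⌉) ⌈M / ℓ⌉
  have hgrid : ∀ᶠ s in atTop, ∀ k ∈ K,
      |χ (s + k * ℓ) - χ s| ≤ ε / 2 ∧ ∀ u ∈ Icc 0 ℓ, |χ (s + k * ℓ + u) - χ (s + k * ℓ)| ≤ ε / 2 :=
    (Finset.eventually_all K).2 fun k _ =>
      ((hχ.eventually_abs_sub_lt _ (half_pos hε)).mono fun _ h => h.le).and
        ((tendsto_atTop_add_const_right _ _ tendsto_id).eventually hwin)
  filter_upwards [hgrid] with s hs u hu
  set k := ⌊u / ℓ⌋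
  have hk : k ∈ K := by
    have h₁ : u / ℓ ≤ M / ℓ := div_le_div_of_nonneg_right hu.2 hℓ.le
    have h₂ : -M / ℓ ≤ u / ℓ := div_le_div_of_nonneg_right hu.1 hℓ.le
    simp only [K, Finset.mem_Icc]
    refine ⟨?_, ?_⟩
    · rw [← Int.floor_neg, ← neg_div]
      exact Int.floor_le_floor h₂
    · exact (Int.floor_le_floor h₁).trans (Int.floor_le_ceil _)
  have hku : u - k * ℓ ∈ Icc 0 ℓ := by
    have h₁ := Int.floor_le (u / ℓ)
    have h₂ := Int.lt_floor_add_one (u / ℓ)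
    rw [le_div_iff₀ hℓ] at h₁
    rw [div_lt_iff₀ hℓ] at h₂
    constructor <;> nlinarith
  obtain ⟨hstep, hwin⟩ := hs k hk
  have := hwin _ hku
  rw [add_add_sub_cancel] at this
  calc |χ (s + u) - χ s| ≤ |χ (s + u) - χ (s + k * ℓ)| + |χ (s + k * ℓ) - χ s| := abs_sub_le _ _ _
    _ ≤ ε / 2 + ε / 2 := add_le_add this hstep
    _ = ε := add_halves ε

theorem tendsto_sub_of_eventually_abs_sub_le (hχ : AddSlowlyVarying χ) (hc : Continuous χ)
    {α : Type*} {l : Filter α} {a b : α → ℝ} (hb : Tendsto b l atTop) {M : ℝ}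
    (hab : ∀ᶠ x in l, |a x - b x| ≤ M) :
    Tendsto (fun x => χ (a x) - χ (b x)) l (𝓝 0) := by
  refine Metric.tendsto_nhds.2 fun ε hε => ?_
  filter_upwards [hb.eventually (hχ.eventually_forall_abs_sub_le hc (half_pos hε) M), hab]
    with x hx hM
  rw [Real.dist_eq, sub_zero]
  have := hx (a x - b x) (abs_le.1 hM)
  rw [add_sub_cancel] at this
  linarith

/-- Potter-type bound: iterate the uniform bound on unit steps. -/
theorem exists_abs_sub_le (hχ : AddSlowlyVarying χ) (hc : Continuous χ) {ε : ℝ} (hε : 0 < ε) :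
    ∃ T, ∀ s t, T ≤ s → T ≤ t → |χ t - χ s| ≤ ε * (|t - s| + 1) := by
  obtain ⟨T, hT⟩ := eventually_atTop.1 (hχ.eventually_forall_abs_sub_le hc hε 1)
  have hsteps : ∀ n : ℕ, ∀ s, T ≤ s → ∀ u ∈ Icc 0 (n : ℝ), |χ (s + u) - χ s| ≤ n * ε := by
    intro n
    induction n with
    | zero =>
      intro s _ u hu
      rw [Nat.cast_zero] at hu ⊢
      simp [le_antisymm hu.2 hu.1]
    | succ n ih =>
      intro s hs u hu
      push_cast at hu ⊢
      rcases le_or_gt u 1 with hu1 | hu1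
      · have := hT s hs u ⟨by linarith [hu.1], hu1⟩
        nlinarith [(Nat.cast_nonneg n : (0 : ℝ) ≤ n)]
      · have h₁ := ih (s + 1) (by linarith) (u - 1) ⟨by linarith, by linarith [hu.2]⟩
        have h₂ := hT s hs 1 ⟨by norm_num, le_rfl⟩
        rw [add_add_sub_cancel] at h₁
        calc |χ (s + u) - χ s| ≤ |χ (s + u) - χ (s + 1)| + |χ (s + 1) - χ s| := abs_sub_le _ _ _
          _ ≤ n * ε + ε := add_le_add h₁ h₂
          _ = (n + 1) * ε := by ring
  have hle : ∀ s t, T ≤ s → s ≤ t → |χ t - χ s| ≤ ε * (|t - s| + 1) := by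
    intro s t hs hst
    have hn := Nat.ceil_lt_add_one (sub_nonneg.2 hst)
    have := hsteps ⌈t - s⌉₊ s hs (t - s) ⟨sub_nonneg.2 hst, Nat.le_ceil _⟩
    rw [add_sub_cancel] at this
    rw [abs_of_nonneg (sub_nonneg.2 hst)]
    nlinarith
  refine ⟨T, fun s t hs ht => ?_⟩
  rcases le_total s t with hst | hts
  · exact hle s t hs hst
  · rw [abs_sub_comm, abs_sub_comm t]
    exact hle t s ht hts

/-- The Potter bound with `ε' = c ε / (1 + ε)`. -/
theorem exists_abs_sub_le_abs_sub_add (hχ : AddSlowlyVarying χ) (hc : Continuous χ)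
    {c : ℝ} (hc₀ : 0 < c) {ε : ℝ} (hε : 0 < ε) :
    ∃ T, ∀ s t, T ≤ s → T ≤ t →
      |χ t - χ s| ≤ ε * (|(χ t + c * t) - (χ s + c * s)| + c) := by
  obtain ⟨T, hT⟩ := hχ.exists_abs_sub_le hc (show 0 < c * ε / (1 + ε) by positivity)
  refine ⟨T, fun s t hs ht => ?_⟩
  have hX := hT s t hs ht
  have hD := mul_abs_sub_le_abs_sub_add_abs_sub χ hc₀.le s t
  rw [div_mul_eq_mul_div, le_div_iff₀ (by positivity)] at hX
  nlinarith

/-- Bounded increments of `χ + c · id` force bounded arguments `a - b`, so the uniform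
convergence theorem applies. -/
theorem tendsto_sub_of_tendsto_sub_add_mul (hχ : AddSlowlyVarying χ) (hc : Continuous χ)
    {α : Type*} {l : Filter α} {a b : α → ℝ} (ha : Tendsto a l atTop) (hb : Tendsto b l atTop)
    {c : ℝ} (hc₀ : 0 < c) {g : ℝ}
    (hG : Tendsto (fun x => (χ (a x) + c * a x) - (χ (b x) + c * b x)) l (𝓝 g)) :
    Tendsto (fun x => χ (a x) - χ (b x)) l (𝓝 0) := by
  obtain ⟨T, hT⟩ := hχ.exists_abs_sub_le_abs_sub_add hc hc₀ one_pos
  have hGb : ∀ᶠ x in l, |(χ (a x) + c * a x) - (χ (b x) + c * b x)| ≤ |g| + 1 := by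
    filter_upwards [Metric.tendsto_nhds.1 hG 1 one_pos] with x hx
    rw [Real.dist_eq] at hx
    linarith [abs_sub_abs_le_abs_sub ((χ (a x) + c * a x) - (χ (b x) + c * b x)) g]
  refine hχ.tendsto_sub_of_eventually_abs_sub_le hc hb (M := (2 * (|g| + 1) + c) / c) ?_
  filter_upwards [ha.eventually_ge_atTop T, hb.eventually_ge_atTop T, hGb] with x hax hbx hGx
  have hX := hT _ _ hbx hax
  have hD := mul_abs_sub_le_abs_sub_add_abs_sub χ hc₀.le (b x) (a x)
  rw [le_div_iff₀ hc₀]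
  linarith

theorem tendsto_sub_sub_mul_atBot (hχ : AddSlowlyVarying χ) (hc : Continuous χ)
    {α : Type*} {l : Filter α} {a b : α → ℝ} (ha : Tendsto a l atTop) (hb : Tendsto b l atTop)
    {c : ℝ} (hc₀ : 0 < c) {μ : ℝ} (hμ : 0 < μ)
    (hG : Tendsto (fun x => (χ (a x) + c * a x) - (χ (b x) + c * b x)) l atTop) :
    Tendsto (fun x => (χ (a x) - χ (b x)) - μ * ((χ (a x) + c * a x) - (χ (b x) + c * b x)))
      l atBot := by
  obtain ⟨T, hT⟩ := hχ.exists_abs_sub_le_abs_sub_add hc hc₀ (half_pos hμ)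
  refine tendsto_atBot_mono' l ?_
    (tendsto_atBot_add_const_left l (μ / 2 * c) (tendsto_neg_atTop_atBot.comp
      (hG.const_mul_atTop (half_pos hμ))))
  filter_upwards [ha.eventually_ge_atTop T, hb.eventually_ge_atTop T, hG.eventually_ge_atTop 0]
    with x hax hbx hGx
  have hX := hT _ _ hbx hax
  rw [abs_of_nonneg hGx] at hX
  simp only [Function.comp_apply]
  linarith [le_abs_self (χ (a x) - χ (b x))]

theorem tendsto_exp_sub_sub_mul_rpow (hχ : AddSlowlyVarying χ) (hc : Continuous χ)
    {α : Type*} {l : Filter α} {a b : α → ℝ} (ha : Tendsto a l atTop) (hb : Tendsto b l atTop)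
    {lam : ℝ} (hlam : lam ∈ Ioo (0 : ℝ) 1) {𝔯 : ℝ} (h𝔯 : 0 ≤ 𝔯)
    (hratio : Tendsto
      (fun x => Real.exp ((χ (b x) + (1 - lam) * b x) - (χ (a x) + (1 - lam) * a x))) l (𝓝 𝔯)) :
    Tendsto (fun x => Real.exp ((χ (a x) - lam * a x) - (χ (b x) - lam * b x))) l
      (𝓝 (𝔯 ^ ((1 - lam)⁻¹ * lam))) := by
  obtain ⟨hlam₀, hlam₁⟩ := hlam
  have hc₀ : 0 < 1 - lam := sub_pos.2 hlam₁
  set G := fun x => (χ (a x) + (1 - lam) * a x) - (χ (b x) + (1 - lam) * b x)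
  have hE : ∀ x, (χ (a x) - lam * a x) - (χ (b x) - lam * b x)
      = ((χ (a x) - χ (b x)) - lam * G x) / (1 - lam) := fun x => by
    field_simp
    ring
  simp_rw [hE]
  rcases h𝔯.eq_or_lt with rfl | h𝔯
  · have hG : Tendsto G l atTop :=
      (tendsto_neg_atBot_atTop.comp (Real.tendsto_exp_comp_nhds_zero.1 hratio)).congr
        fun x => neg_sub _ _
    rw [Real.zero_rpow (by positivity)]
    exact Real.tendsto_exp_comp_nhds_zero.2
      ((hχ.tendsto_sub_sub_mul_atBot hc ha hb hc₀ hlam₀ hG).atBot_div_const hc₀)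
  · have hG : Tendsto G l (𝓝 (-Real.log 𝔯)) := by
      simpa [G, Function.comp_def] using ((Real.continuousAt_log h𝔯.ne').tendsto.comp hratio).neg
    have hX := hχ.tendsto_sub_of_tendsto_sub_add_mul hc ha hb hc₀ hG
    rw [Real.rpow_def_of_pos h𝔯,
      show Real.log 𝔯 * ((1 - lam)⁻¹ * lam) = (0 - lam * -Real.log 𝔯) / (1 - lam) by ring]
    exact (Real.continuous_exp.tendsto _).comp ((hX.sub (hG.const_mul lam)).div_const _)

end AddSlowlyVarying

noncomputable def logSlowPart (σ : ℝ → ℝ) (lam s : ℝ) : ℝ :=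
  Real.log (σ (Real.exp (-s))) + lam * s

theorem continuous_logSlowPart {σ : ℝ → ℝ} (hσcont : ContinuousOn σ (Ici 0))
    (hσpos : ∀ t > (0 : ℝ), 0 < σ t) (lam : ℝ) : Continuous (logSlowPart σ lam) := by
  have hcomp : Continuous fun s => σ (Real.exp (-s)) :=
    hσcont.comp_continuous (by fun_prop) fun s => (Real.exp_pos _).le
  exact (hcomp.log fun s => (hσpos _ (Real.exp_pos _)).ne').add (by fun_prop)

theorem addSlowlyVarying_logSlowPart {σ : ℝ → ℝ} {lam : ℝ} (hσpos : ∀ t > (0 : ℝ), 0 < σ t)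
    (hL1 : ∀ t > (0 : ℝ), Tendsto (fun x => σ (t * x) / σ x) (𝓝[>] 0) (𝓝 (t ^ lam))) :
    AddSlowlyVarying (logSlowPart σ lam) := by
  intro u
  have hexp : Tendsto (fun s : ℝ => Real.exp (-s)) atTop (𝓝[>] 0) :=
    tendsto_nhdsWithin_iff.2 ⟨Real.tendsto_exp_atBot.comp tendsto_neg_atTop_atBot,
      Eventually.of_forall fun s => Real.exp_pos _⟩
  have hlog := (Real.continuousAt_log (Real.rpow_pos_of_pos (Real.exp_pos (-u)) lam).ne').tendsto
  have hlim := (hlog.comp ((hL1 _ (Real.exp_pos (-u))).comp hexp)).add_const (lam * u)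
  rw [Real.log_rpow (Real.exp_pos _), Real.log_exp, mul_neg, neg_add_cancel] at hlim
  refine hlim.congr fun s => ?_
  have hsplit : Real.exp (-(s + u)) = Real.exp (-u) * Real.exp (-s) := by
    rw [← Real.exp_add, neg_add, add_comm]
  simp only [Function.comp_apply, logSlowPart, hsplit]
  rw [Real.log_div (hσpos _ (by positivity)).ne' (hσpos _ (Real.exp_pos _)).ne']
  ring

theorem exp_logSlowPart_of_mul_eq {σ : ℝ → ℝ} (lam : ℝ) {r y : ℝ} (hr : 0 < r) (hy : 0 < y)
    (h : r * y = σ y) :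
    Real.exp (logSlowPart σ lam (-Real.log y) + (1 - lam) * -Real.log y) = r ∧
      Real.exp (logSlowPart σ lam (-Real.log y) - lam * -Real.log y) = σ y := by
  have hσ : 0 < σ y := h ▸ mul_pos hr hy
  have hχ : logSlowPart σ lam (-Real.log y) = Real.log (σ y) - lam * Real.log y := by
    rw [logSlowPart, neg_neg, Real.exp_log hy]
    ring
  rw [hχ]
  refine ⟨?_, ?_⟩
  · rw [show Real.log (σ y) - lam * Real.log y + (1 - lam) * -Real.log y
      = Real.log (σ y) - Real.log y by ring, Real.exp_sub, Real.exp_log hσ, Real.exp_log hy, ← h,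
      mul_div_cancel_right₀ _ hy.ne']
  · rw [show Real.log (σ y) - lam * Real.log y - lam * -Real.log y = Real.log (σ y) by ring,
      Real.exp_log hσ]

theorem tendsto_neg_log_comp_atTop {δ : ℝ → ℝ} {x₀ : ℝ} (hδpos : ∀ x > x₀, 0 < δ x)
    (hδ0 : Tendsto δ atTop (𝓝 0)) {α : Type*} {l : Filter α} {r : α → ℝ}
    (hr : Tendsto r l atTop) :
    Tendsto (fun u => -Real.log (δ (r u))) l atTop :=
  tendsto_neg_atBot_atTop.comp (Real.tendsto_log_nhdsGT_zero.comp (tendsto_nhdsWithin_iff.2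
    ⟨hδ0.comp hr, (hr.eventually_gt_atTop x₀).mono fun _ hu => hδpos _ hu⟩))

theorem eventually_exp_logSlowPart {σ δ : ℝ → ℝ} (lam : ℝ) {x₀ : ℝ} (hδpos : ∀ x > x₀, 0 < δ x)
    (hδeq : ∀ x > x₀, x * δ x = σ (δ x)) {α : Type*} {l : Filter α} {r : α → ℝ}
    (hr : Tendsto r l atTop) :
    ∀ᶠ u in l,
      Real.exp (logSlowPart σ lam (-Real.log (δ (r u))) + (1 - lam) * -Real.log (δ (r u))) = r u ∧
      Real.exp (logSlowPart σ lam (-Real.log (δ (r u))) - lam * -Real.log (δ (r u)))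
        = σ (δ (r u)) := by
  filter_upwards [hr.eventually_gt_atTop (max x₀ 0)] with u hu
  obtain ⟨hx₀, h₀⟩ := max_lt_iff.1 hu
  exact exp_logSlowPart_of_mul_eq lam h₀ (hδpos _ hx₀) (hδeq _ hx₀)

theorem routing_coefficient_limit_general
    (lam : ℝ) (hlam : lam ∈ Set.Ioo (0:ℝ) 1)
    (σ : ℝ → ℝ) (hσcont : ContinuousOn σ (Set.Ici 0))
    (hσpos : ∀ t > (0:ℝ), 0 < σ t)
    -- σ regularly varying at 0 with index λ (assumption L1)
    (hL1 : ∀ t > (0:ℝ), Tendsto (fun x => σ (t * x) / σ x) (𝓝[>] 0) (𝓝 (t ^ lam)))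
    (x₀ : ℝ) (δ : ℝ → ℝ)
    (hδpos : ∀ x > x₀, 0 < δ x)
    (hδeq : ∀ x > x₀, x * δ x = σ (δ x))
    (hδ0 : Tendsto δ atTop (𝓝 0))
    (ri rj : ℝ → ℝ)
    (hri : Tendsto ri atTop atTop) (hrj : Tendsto rj atTop atTop)
    (𝔯 : ℝ) (h𝔯 : 𝔯 ∈ Set.Icc (0:ℝ) 1)
    (hratio : Tendsto (fun u => rj u / ri u) atTop (𝓝 𝔯))
    (p : ℝ) :
    Tendsto (fun u => p * (ri u * δ (ri u)) / (rj u * δ (rj u))) atTop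
      (𝓝 (p * 𝔯 ^ ((1 - lam)⁻¹ * lam))) ∧
    Tendsto (fun u => p * σ (δ (ri u)) / σ (δ (rj u))) atTop
      (𝓝 (p * 𝔯 ^ ((1 - lam)⁻¹ * lam))) := by
  have hχ := addSlowlyVarying_logSlowPart hσpos hL1
  have hc := continuous_logSlowPart hσcont hσpos lam
  have key : Tendsto (fun u => σ (δ (ri u)) / σ (δ (rj u))) atTop
      (𝓝 (𝔯 ^ ((1 - lam)⁻¹ * lam))) := by
    refine (hχ.tendsto_exp_sub_sub_mul_rpow hc (tendsto_neg_log_comp_atTop hδpos hδ0 hri)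
      (tendsto_neg_log_comp_atTop hδpos hδ0 hrj) hlam h𝔯.1 (hratio.congr' ?_)).congr' ?_
    all_goals filter_upwards [eventually_exp_logSlowPart lam hδpos hδeq hri,
      eventually_exp_logSlowPart lam hδpos hδeq hrj] with u hi hj
    · rw [Real.exp_sub, hi.1, hj.1]
    · rw [Real.exp_sub, hi.2, hj.2]
  refine ⟨(key.const_mul p).congr' ?_, (key.const_mul p).congr fun u => (mul_div_assoc _ _ _).symm⟩
  filter_upwards [hri.eventually_gt_atTop x₀, hrj.eventually_gt_atTop x₀] with u hi hj
  rw [hδeq _ hi, hδeq _ hj, mul_div_assoc]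

/-- **Convergence of the rescaled routing coefficients.** Under L1, with `δ` regularly
varying at `∞` with index `−κ` (`κ = (1−λ)⁻¹`) solving `x δ(x) = σ(δ(x))` and tending
to `0`, rates `r_i, r_j → ∞` with `r_j/r_i → 𝔯_{ij} ∈ [0,1]`, and `p_{ij} ≥ 0`:
`p_{ij} (r_i δ(r_i))/(r_j δ(r_j)) → p_{ij} 𝔯_{ij}^{κλ}` (with `0^{κλ} := 0`),
equivalently `p_{ij} σ(δ(r_i))/σ(δ(r_j)) → p_{ij} 𝔯_{ij}^{κλ}`. -/
theorem routing_coefficient_limit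
    (lam : ℝ) (hlam : lam ∈ Set.Ioo (0:ℝ) 1)
    (σ : ℝ → ℝ) (hσcont : ContinuousOn σ (Set.Ici 0))
    (hσpos : ∀ t > (0:ℝ), 0 < σ t)
    -- σ regularly varying at 0 with index λ (assumption L1)
    (hL1 : ∀ t > (0:ℝ), Tendsto (fun x => σ (t * x) / σ x) (𝓝[>] 0) (𝓝 (t ^ lam)))
    (x₀ : ℝ) (δ : ℝ → ℝ)
    (hδpos : ∀ x > x₀, 0 < δ x)
    (hδRV : ∀ t > (0:ℝ),
      Tendsto (fun x => δ (t * x) / δ x) atTop (𝓝 (t ^ (-(1 - lam)⁻¹))))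
    (hδeq : ∀ x > x₀, x * δ x = σ (δ x))
    (hδ0 : Tendsto δ atTop (𝓝 0))
    (ri rj : ℝ → ℝ)
    (hri : Tendsto ri atTop atTop) (hrj : Tendsto rj atTop atTop)
    (𝔯 : ℝ) (h𝔯 : 𝔯 ∈ Set.Icc (0:ℝ) 1)
    (hratio : Tendsto (fun u => rj u / ri u) atTop (𝓝 𝔯))
    (p : ℝ) (hp : 0 ≤ p) :
    Tendsto (fun u => p * (ri u * δ (ri u)) / (rj u * δ (rj u))) atTop
      (𝓝 (p * 𝔯 ^ ((1 - lam)⁻¹ * lam))) ∧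
    Tendsto (fun u => p * σ (δ (ri u)) / σ (δ (rj u))) atTop
      (𝓝 (p * 𝔯 ^ ((1 - lam)⁻¹ * lam))) :=
  routing_coefficient_limit_general lam hlam σ hσcont hσpos hL1 x₀ δ hδpos hδeq hδ0 ri rj hri hrj 𝔯
    h𝔯 hratio p
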